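/- Let ρ and σ be density matrices on a d-dimensional Hilbert space with trace distance T = (1/2)‖ρ − σ‖₁ ≤ 1/e. Then the von Neumann entropies satisfy |S(ρ) − S(σ)| ≤ 2T·log d + η(2T), where η(x) = −x log x (Fannes' inequality). -/

import Mathlib

/-!
Pinch `ρ` in an eigenbasis of `σ`. Writing `U` for the change of basis between the two
eigenbases, the diagonal `p` of `ρ` in that basis is the spectrum of `ρ` multiplied by the
doubly stochastic matrix `(|U i j|²)`, so its Shannon entropy satisfies `H(p) ≥ S(ρ)` by
concavity of `η`; the diagonal of `σ` is its spectrum `q`, and `‖p - q‖₁ ≤ ‖ρ - σ‖₁ = 2T`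
by the same argument applied to the convex function `|·|`. This reduces `S(ρ) - S(σ)` to the
classical bound `H(p) - H(q) ≤ ε log d + η ε` for `ε = ‖p - q‖₁`, which follows from
`|η x - η y| ≤ η |x - y|` (valid for `|x - y| ≤ 1/e`) and Jensen's inequality for `η`.
Finally `x ↦ x log d + η x` is increasing on `[0, d/e]`, so `ε` may be replaced by `2T`.
-/

open Matrix Finset
open scoped ComplexOrder

namespace Real

lemma negMulLog_le_tangent {a b : ℝ} (ha : 0 ≤ a) (hb : 0 < b) :
    negMulLog a ≤ b - a - a * log b := by
  rcases ha.eq_or_lt with rfl | ha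
  · simpa using hb.le
  have h := mul_le_mul_of_nonneg_left (log_le_sub_one_of_pos (div_pos hb ha)) ha.le
  rw [log_div hb.ne' ha.ne', mul_sub, mul_sub, mul_div_cancel₀ _ ha.ne'] at h
  rw [negMulLog]
  linarith

lemma negMulLog_add_le {x y : ℝ} (hx : 0 ≤ x) (hy : 0 ≤ y) :
    negMulLog (x + y) ≤ negMulLog x + negMulLog y := by
  have hmul_log : ∀ {u v : ℝ}, 0 ≤ u → 0 ≤ v → u * log u ≤ u * log (u + v) := by
    intro u v hu hv
    rcases hu.eq_or_lt with rfl | hu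
    · simp
    · exact mul_le_mul_of_nonneg_left (log_le_log hu (by linarith)) hu.le
  have hx' := hmul_log hx hy
  have hy' := hmul_log hy hx
  rw [add_comm y] at hy'
  simp only [negMulLog]
  linarith

lemma negMulLog_sub_negMulLog_add_le {x t : ℝ} (hx : 0 ≤ x) (ht : 0 ≤ t) (h1 : x + t ≤ 1) :
    negMulLog x - negMulLog (x + t) ≤ t := by
  rcases (add_nonneg hx ht).eq_or_lt with h0 | h0
  · obtain ⟨rfl, rfl⟩ : x = 0 ∧ t = 0 := ⟨by linarith, by linarith⟩
    simp
  have hlog := mul_nonpos_of_nonneg_of_nonpos ht (log_nonpos h0.le h1)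
  have := negMulLog_le_tangent hx h0
  simp only [negMulLog] at this ⊢
  nlinarith

lemma self_le_negMulLog {t : ℝ} (ht : 0 ≤ t) (h : t ≤ exp (-1)) : t ≤ negMulLog t := by
  rcases ht.eq_or_lt with rfl | ht
  · simp
  have hlog : log t ≤ -1 := (log_le_log ht h).trans_eq (log_exp _)
  rw [negMulLog]
  nlinarith

lemma abs_negMulLog_sub_le {x y : ℝ} (hx : 0 ≤ x) (hy : 0 ≤ y) (hx1 : x ≤ 1) (hy1 : y ≤ 1)
    (h : |x - y| ≤ exp (-1)) : |negMulLog x - negMulLog y| ≤ negMulLog |x - y| := by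
  wlog hyx : y ≤ x generalizing x y
  · rw [abs_sub_comm, abs_sub_comm x] at *
    exact this hy hx hy1 hx1 h (le_of_not_ge hyx)
  obtain ⟨t, ht, rfl⟩ : ∃ t, 0 ≤ t ∧ x = y + t := ⟨x - y, by linarith, by ring⟩
  rw [add_sub_cancel_left, abs_of_nonneg ht] at *
  rw [abs_le]
  constructor
  · linarith [negMulLog_sub_negMulLog_add_le hy ht hx1, self_le_negMulLog ht h]
  · linarith [negMulLog_add_le hy ht]

lemma sum_negMulLog_le {ι : Type*} [Fintype ι] (x : ι → ℝ) (hx : ∀ i, 0 ≤ x i) :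
    ∑ i, negMulLog (x i) ≤ (∑ i, x i) * log (Fintype.card ι) + negMulLog (∑ i, x i) := by
  set d : ℝ := (Fintype.card ι : ℝ)
  rcases isEmpty_or_nonempty ι with hι | hι
  · simp
  have hd : 0 < d := by positivity
  have hjensen := concaveOn_negMulLog.le_map_sum (t := univ) (w := fun _ => d⁻¹) (p := x)
    (fun _ _ => by positivity) (by simp [d]) (fun i _ => hx i)
  simp only [smul_eq_mul, ← mul_sum] at hjensen
  have hinv : negMulLog d⁻¹ = d⁻¹ * log d := by simp [negMulLog, log_inv]
  calc ∑ i, negMulLog (x i) = d * (d⁻¹ * ∑ i, negMulLog (x i)) := by field_simp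
    _ ≤ d * negMulLog (d⁻¹ * ∑ i, x i) := by gcongr
    _ = (∑ i, x i) * log d + negMulLog (∑ i, x i) := by
      rw [negMulLog_mul, hinv]
      field_simp

lemma monotoneOn_mul_log_add_negMulLog {D : ℝ} (hD : 0 < D) :
    MonotoneOn (fun x => x * log D + negMulLog x) (Set.Icc 0 (D * exp (-1))) := by
  rintro a ⟨ha, -⟩ b ⟨-, hbD⟩ hab
  rcases (ha.trans hab).eq_or_lt with hb | hb
  · obtain rfl : a = 0 := by linarith
    simp [← hb]
  have hlog : log b + 1 ≤ log D := by
    have := log_le_log hb hbD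
    rwa [log_mul hD.ne' (exp_pos _).ne', log_exp, ← sub_eq_add_neg, le_sub_iff_add_le] at this
  have := negMulLog_le_tangent ha hb
  simp only [negMulLog] at this ⊢
  nlinarith [mul_nonneg (sub_nonneg.2 hab) (sub_nonneg.2 hlog)]

end Real

open Real

lemma abs_sub_le_half_sum_abs_sub {ι : Type*} [Fintype ι] {p q : ι → ℝ}
    (h : ∑ i, p i = ∑ i, q i) (i : ι) : |p i - q i| ≤ (∑ j, |p j - q j|) / 2 := by
  classical
  have hsum : ∑ j, (p j - q j) = 0 := by rw [sum_sub_distrib, h, sub_self]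
  rw [← add_sum_erase _ _ (mem_univ i)] at hsum
  have hrest : |∑ j ∈ univ.erase i, (p j - q j)| = |p i - q i| := by
    rw [eq_neg_of_add_eq_zero_left hsum, abs_neg]
  have := abs_sum_le_sum_abs (fun j => p j - q j) (univ.erase i)
  rw [← add_sum_erase _ _ (mem_univ i)]
  linarith

section ProbabilityVector

variable {ι : Type*} [Fintype ι] {p q : ι → ℝ}

lemma sum_negMulLog_sub_sum_negMulLog_le (hp : ∀ i, 0 ≤ p i) (hq : ∀ i, 0 ≤ q i)
    (hp1 : ∑ i, p i = 1) (hq1 : ∑ i, q i = 1) (hpq : ∑ i, |p i - q i| ≤ 2 * exp (-1)) :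
    ∑ i, negMulLog (p i) - ∑ i, negMulLog (q i)
      ≤ (∑ i, |p i - q i|) * log (Fintype.card ι) + negMulLog (∑ i, |p i - q i|) := by
  have hle_one : ∀ {r : ι → ℝ}, (∀ i, 0 ≤ r i) → ∑ i, r i = 1 → ∀ i, r i ≤ 1 :=
    fun hr hr1 i => (single_le_sum (fun j _ => hr j) (mem_univ i)).trans hr1.le
  calc ∑ i, negMulLog (p i) - ∑ i, negMulLog (q i)
      = ∑ i, (negMulLog (p i) - negMulLog (q i)) := (sum_sub_distrib ..).symm
    _ ≤ ∑ i, negMulLog |p i - q i| := by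
      refine sum_le_sum fun i _ => (le_abs_self _).trans <| abs_negMulLog_sub_le (hp i) (hq i)
        (hle_one hp hp1 i) (hle_one hq hq1 i) ?_
      linarith [abs_sub_le_half_sum_abs_sub (hp1.trans hq1.symm) i]
    _ ≤ _ := sum_negMulLog_le _ fun i => abs_nonneg _

lemma sum_negMulLog_sub_sum_negMulLog_le_of_le (hp : ∀ i, 0 ≤ p i) (hq : ∀ i, 0 ≤ q i)
    (hp1 : ∑ i, p i = 1) (hq1 : ∑ i, q i = 1) {t : ℝ} (hpq : ∑ i, |p i - q i| ≤ t)
    (ht : t ≤ 2 * exp (-1)) :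
    ∑ i, negMulLog (p i) - ∑ i, negMulLog (q i)
      ≤ t * log (Fintype.card ι) + negMulLog t := by
  have ht0 : 0 ≤ t := (sum_nonneg fun i _ => abs_nonneg _).trans hpq
  rcases le_or_gt (Fintype.card ι) 1 with hcard | hcard
  · have := Fintype.card_le_one_iff_subsingleton.mp hcard
    obtain rfl : p = q := funext fun i => by
      rw [← Fintype.sum_subsingleton p i, ← Fintype.sum_subsingleton q i, hp1, hq1]
    have ht1 : t ≤ 1 := ht.trans <| by
      rw [exp_neg, ← div_eq_mul_inv, div_le_one (exp_pos 1)]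
      linarith [add_one_le_exp 1]
    rw [sub_self]
    exact add_nonneg (mul_nonneg ht0 (log_natCast_nonneg _)) (negMulLog_nonneg ht0 ht1)
  · have hε0 : 0 ≤ ∑ i, |p i - q i| := sum_nonneg fun i _ => abs_nonneg _
    have hcard' : (2 : ℝ) ≤ Fintype.card ι := by exact_mod_cast hcard
    have ht' : t ≤ Fintype.card ι * exp (-1) := ht.trans (by gcongr)
    exact (sum_negMulLog_sub_sum_negMulLog_le hp hq hp1 hq1 (hpq.trans ht)).trans <|
      monotoneOn_mul_log_add_negMulLog (by positivity) ⟨hε0, hpq.trans ht'⟩ ⟨ht0, ht'⟩ hpq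

end ProbabilityVector

section DoublyStochastic

variable {n : Type*} [Fintype n] [DecidableEq n] {s : Set ℝ} {f : ℝ → ℝ} {M : Matrix n n ℝ}
  {x : n → ℝ}

lemma ConvexOn.sum_map_mulVec_le (hf : ConvexOn ℝ s f) (hM : M ∈ doublyStochastic ℝ n)
    (hx : ∀ i, x i ∈ s) : ∑ i, f ((M *ᵥ x) i) ≤ ∑ i, f (x i) :=
  calc ∑ i, f ((M *ᵥ x) i) ≤ ∑ i, ∑ j, M i j * f (x j) := sum_le_sum fun i _ =>
        hf.map_sum_le (fun j _ => nonneg_of_mem_doublyStochastic hM)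
          (sum_row_of_mem_doublyStochastic hM i) (fun j _ => hx j)
    _ = ∑ j, f (x j) := by
      rw [sum_comm]
      simp only [← sum_mul, sum_col_of_mem_doublyStochastic hM, one_mul]

lemma ConcaveOn.sum_le_sum_map_mulVec (hf : ConcaveOn ℝ s f) (hM : M ∈ doublyStochastic ℝ n)
    (hx : ∀ i, x i ∈ s) : ∑ i, f (x i) ≤ ∑ i, f ((M *ᵥ x) i) := by
  simpa using hf.neg.sum_map_mulVec_le hM hx

end DoublyStochastic

namespace Matrix

variable {𝕜 n : Type*} [RCLike 𝕜] [Fintype n]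

lemma mul_conjTranspose_apply_self {m : Type*} (A : Matrix m n 𝕜) (i : m) :
    (A * Aᴴ) i i = ((∑ j, ‖A i j‖ ^ 2 : ℝ) : 𝕜) := by
  simp only [mul_apply, conjTranspose_apply, ← starRingEnd_apply, RCLike.mul_conj]
  push_cast
  rfl

lemma PosSemidef.re_diag_conj_nonneg {A : Matrix n n 𝕜} (hA : A.PosSemidef) (W : Matrix n n 𝕜)
    (i : n) : 0 ≤ RCLike.re ((Wᴴ * A * W) i i) :=
  (RCLike.nonneg_iff.mp (hA.conjTranspose_mul_mul_same W).diag_nonneg).1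

variable [DecidableEq n]

lemma of_norm_sq_mem_doublyStochastic {U : Matrix n n 𝕜} (hU : U ∈ unitaryGroup n 𝕜) :
    of (fun i j => ‖U i j‖ ^ 2) ∈ doublyStochastic ℝ n := by
  refine mem_doublyStochastic_iff_sum.2 ⟨fun i j => sq_nonneg _, fun i => ?_, fun j => ?_⟩
  · have := mul_conjTranspose_apply_self U i
    rw [← star_eq_conjTranspose, Unitary.mul_star_self_of_mem hU, one_apply_eq] at this
    exact_mod_cast this.symm
  · have := mul_conjTranspose_apply_self Uᴴ j
    rw [conjTranspose_conjTranspose, ← star_eq_conjTranspose, Unitary.star_mul_self_of_mem hU,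
      one_apply_eq] at this
    have h : ∑ i, ‖Uᴴ j i‖ ^ 2 = 1 := by exact_mod_cast this.symm
    simpa only [of_apply, conjTranspose_apply, norm_star] using h

lemma re_mul_diagonal_mul_conjTranspose_apply_self (M : Matrix n n 𝕜) (x : n → ℝ) (i : n) :
    RCLike.re ((M * diagonal (RCLike.ofReal ∘ x : n → 𝕜) * Mᴴ) i i)
      = (of (fun i j => ‖M i j‖ ^ 2) *ᵥ x) i := by
  rw [mul_apply]
  simp only [mul_diagonal, conjTranspose_apply, mulVec, dotProduct, of_apply, Function.comp_apply,
    mul_right_comm _ (RCLike.ofReal _), ← starRingEnd_apply, RCLike.mul_conj]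
  simp

lemma sum_re_diag_conj {W : Matrix n n 𝕜} (hW : W ∈ unitaryGroup n 𝕜)
    (A : Matrix n n 𝕜) : ∑ i, RCLike.re ((Wᴴ * A * W) i i) = RCLike.re A.trace := by
  rw [← map_sum]
  change RCLike.re (Wᴴ * A * W).trace = _
  rw [trace_mul_cycle, ← star_eq_conjTranspose, Unitary.mul_star_self_of_mem hW, Matrix.one_mul]

namespace IsHermitian

variable {A : Matrix n n 𝕜}

lemma re_diag_conj_eq_mulVec (hA : A.IsHermitian) (W : Matrix n n 𝕜) :
    (fun i => RCLike.re ((Wᴴ * A * W) i i)) =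
      of (fun i j => ‖(Wᴴ * (hA.eigenvectorUnitary : Matrix n n 𝕜)) i j‖ ^ 2) *ᵥ
        hA.eigenvalues := by
  funext i
  rw [← re_mul_diagonal_mul_conjTranspose_apply_self]
  conv_lhs => rw [hA.spectral_theorem]
  simp [conjTranspose_mul, Matrix.mul_assoc, star_eq_conjTranspose]

lemma re_diag_conj_eigenvectorUnitary (hA : A.IsHermitian) (i : n) :
    RCLike.re (((hA.eigenvectorUnitary : Matrix n n 𝕜)ᴴ * A * hA.eigenvectorUnitary) i i)
      = hA.eigenvalues i := by
  have := hA.conjStarAlgAut_star_eigenvectorUnitary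
  simp only [Unitary.conjStarAlgAut_apply, Unitary.coe_star, star_star] at this
  rw [← star_eq_conjTranspose, this]
  simp

lemma sum_abs_re_diag_conj_le (hA : A.IsHermitian) {W : Matrix n n 𝕜}
    (hW : W ∈ unitaryGroup n 𝕜) :
    ∑ i, |RCLike.re ((Wᴴ * A * W) i i)| ≤ ∑ i, |hA.eigenvalues i| := by
  have := (convexOn_univ_norm (E := ℝ)).sum_map_mulVec_le
    (of_norm_sq_mem_doublyStochastic (mul_mem (Unitary.star_mem hW) hA.eigenvectorUnitary.2))
    (x := hA.eigenvalues) fun _ => Set.mem_univ _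
  rw [star_eq_conjTranspose, ← hA.re_diag_conj_eq_mulVec] at this
  simpa only [Real.norm_eq_abs] using this

lemma sum_abs_eigenvalues_of_eq_neg {B : Matrix n n 𝕜} (hA : A.IsHermitian)
    (hB : B.IsHermitian) (h : B = -A) : ∑ i, |hB.eigenvalues i| = ∑ i, |hA.eigenvalues i| := by
  have key : ∀ {A B : Matrix n n 𝕜} (hA : A.IsHermitian) (hB : B.IsHermitian), B = -A →
      ∑ i, |hB.eigenvalues i| ≤ ∑ i, |hA.eigenvalues i| := by
    rintro A B hA hB rfl
    calc ∑ i, |hB.eigenvalues i|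
        = ∑ i, |RCLike.re (((hB.eigenvectorUnitary : Matrix n n 𝕜)ᴴ * A *
            hB.eigenvectorUnitary) i i)| := by
          simp [← hB.re_diag_conj_eigenvectorUnitary]
      _ ≤ _ := hA.sum_abs_re_diag_conj_le hB.eigenvectorUnitary.2
  exact le_antisymm (key hA hB h) (key hB hA (by rw [h, neg_neg]))

end IsHermitian

namespace PosSemidef

variable {A B : Matrix n n 𝕜}

lemma sum_negMulLog_eigenvalues_le (hA : A.PosSemidef) {W : Matrix n n 𝕜}
    (hW : W ∈ unitaryGroup n 𝕜) :
    ∑ i, negMulLog (hA.1.eigenvalues i)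
      ≤ ∑ i, negMulLog (RCLike.re ((Wᴴ * A * W) i i)) := by
  have := concaveOn_negMulLog.sum_le_sum_map_mulVec
    (of_norm_sq_mem_doublyStochastic (mul_mem (Unitary.star_mem hW) hA.1.eigenvectorUnitary.2))
    fun i => Set.mem_Ici.2 (hA.eigenvalues_nonneg i)
  rwa [star_eq_conjTranspose, ← hA.1.re_diag_conj_eq_mulVec] at this

lemma sum_negMulLog_eigenvalues_sub_le (hA : A.PosSemidef) (hB : B.PosSemidef)
    (hAtr : A.trace = 1) (hBtr : B.trace = 1) (hAB : (A - B).IsHermitian) {t : ℝ}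
    (hAB_t : ∑ i, |hAB.eigenvalues i| ≤ t) (ht : t ≤ 2 * exp (-1)) :
    ∑ i, negMulLog (hA.1.eigenvalues i) - ∑ i, negMulLog (hB.1.eigenvalues i)
      ≤ t * log (Fintype.card n) + negMulLog t := by
  set V : Matrix n n 𝕜 := hB.1.eigenvectorUnitary.1
  have hV : V ∈ unitaryGroup n 𝕜 := hB.1.eigenvectorUnitary.2
  set p := fun i => RCLike.re ((Vᴴ * A * V) i i)
  set q := fun i => RCLike.re ((Vᴴ * B * V) i i)
  have hq : hB.1.eigenvalues = q := funext fun i => (hB.1.re_diag_conj_eigenvectorUnitary i).symm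
  have hpq : ∑ i, |p i - q i| ≤ t :=
    calc ∑ i, |p i - q i| = ∑ i, |RCLike.re ((Vᴴ * (A - B) * V) i i)| := by
          simp [p, q, Matrix.mul_sub, Matrix.sub_mul]
      _ ≤ t := (hAB.sum_abs_re_diag_conj_le hV).trans hAB_t
  have hsum_one : ∀ {C : Matrix n n 𝕜}, C.trace = 1 →
      ∑ i, RCLike.re ((Vᴴ * C * V) i i) = 1 := fun hC => by
    rw [sum_re_diag_conj hV, hC, RCLike.one_re]
  calc _ ≤ ∑ i, negMulLog (p i) - ∑ i, negMulLog (q i) := by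
        rw [hq]
        exact sub_le_sub_right (hA.sum_negMulLog_eigenvalues_le hV) _
    _ ≤ _ := sum_negMulLog_sub_sum_negMulLog_le_of_le (hA.re_diag_conj_nonneg V)
        (hB.re_diag_conj_nonneg V) (hsum_one hAtr) (hsum_one hBtr) hpq ht

end PosSemidef

end Matrix

theorem fannes_inequality_general
    {d : ℕ} (ρ σ : Matrix (Fin d) (Fin d) ℂ)
    (hρ : ρ.PosSemidef) (hσ : σ.PosSemidef)
    (hρtr : ρ.trace = 1) (hσtr : σ.trace = 1)
    (hdiff : (ρ - σ).IsHermitian)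
    (T : ℝ) (hT : T = (1 / 2) * ∑ i, |hdiff.eigenvalues i|)
    (hTe : T ≤ 1 / Real.exp 1) :
    |(-∑ i, hρ.1.eigenvalues i * Real.log (hρ.1.eigenvalues i))
      - (-∑ i, hσ.1.eigenvalues i * Real.log (hσ.1.eigenvalues i))|
      ≤ 2 * T * Real.log d + (-(2 * T) * Real.log (2 * T)) := by
  have h2T : 2 * T ≤ 2 * exp (-1) := by rw [exp_neg, ← one_div]; linarith
  have hρσ : ∑ i, |hdiff.eigenvalues i| ≤ 2 * T := by rw [hT]; linarith
  have hσρ : ∑ i, |(hσ.1.sub hρ.1).eigenvalues i| ≤ 2 * T := by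
    rwa [IsHermitian.sum_abs_eigenvalues_of_eq_neg hdiff _ (neg_sub ρ σ).symm]
  have h₁ := hρ.sum_negMulLog_eigenvalues_sub_le hσ hρtr hσtr hdiff hρσ h2T
  have h₂ := hσ.sum_negMulLog_eigenvalues_sub_le hρ hσtr hρtr _ hσρ h2T
  simp only [Fintype.card_fin, negMulLog, neg_mul, sum_neg_distrib] at h₁ h₂ ⊢
  rw [abs_sub_le_iff]
  constructor <;> linarith

/-- **Fannes' inequality.**
For density matrices `ρ, σ` on a `d`-dimensional space with trace distance
`T = ½‖ρ-σ‖₁ = ½ ∑ |eigenvalues (ρ-σ)| ≤ 1/e`, the von Neumann entropies satisfy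
`|S(ρ) - S(σ)| ≤ 2T log d + η(2T)` with `η(x) = -x log x`. -/
theorem fannes_inequality
    {d : ℕ} (hd : 0 < d) (ρ σ : Matrix (Fin d) (Fin d) ℂ)
    (hρ : ρ.PosSemidef) (hσ : σ.PosSemidef)
    (hρtr : ρ.trace = 1) (hσtr : σ.trace = 1)
    (hdiff : (ρ - σ).IsHermitian)
    (T : ℝ) (hT : T = (1 / 2) * ∑ i, |hdiff.eigenvalues i|)
    (hTe : T ≤ 1 / Real.exp 1) :
    |(-∑ i, hρ.1.eigenvalues i * Real.log (hρ.1.eigenvalues i))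
      - (-∑ i, hσ.1.eigenvalues i * Real.log (hσ.1.eigenvalues i))|
      ≤ 2 * T * Real.log d + (-(2 * T) * Real.log (2 * T)) :=
  fannes_inequality_general ρ σ hρ hσ hρtr hσtr hdiff T hT hTe
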